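/- arXiv:2410.02623 — 3 statements merged into one kernel-verified Lean document; each statement's English description precedes it below -/
import Mathlib

section
/- Let y₁ < y₂ < y₃ < y₄ < y₅ be five real numbers. For a finite multiset P of reals, define SS(P) = Σ_{y ∈ P} (y − μ(P))², where μ(P) is the mean of P. Then SS({y₁, y₃}) + SS({y₂, y₄, y₅}) > SS({y₁, y₂}) + SS({y₃, y₄, y₅}); that is, exchanging y₂ and y₃ between the two groups strictly decreases the total within-group sum of squares. -/
/-! Both groups' sums of squares are explicit in the pairwise gaps. Moving `y₂` out of and `y₃`
into the pair changes it by `(y₃ - y₂)(y₂ + y₃ - 2y₁)/2`, and the complementary swap changes the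
triple by `2(y₃ - y₂)(y₄ + y₅ - y₂ - y₃)/3`; both are positive because `y₁` lies below, and
`y₄, y₅` above, both of the exchanged points. -/

open Finset

noncomputable def mu (P : Finset ℝ) : ℝ := (∑ y ∈ P, y) / P.card

noncomputable def SS (P : Finset ℝ) : ℝ := ∑ y ∈ P, (y - mu P) ^ 2

theorem SS_pair {a b : ℝ} (hab : a ≠ b) : SS {a, b} = (a - b) ^ 2 / 2 := by
  simp only [SS, mu, sum_pair hab, card_pair hab]
  push_cast
  ring

theorem SS_triple {a b c : ℝ} (hab : a ≠ b) (hac : a ≠ c) (hbc : b ≠ c) :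
    SS {a, b, c} = ((a - b) ^ 2 + (a - c) ^ 2 + (b - c) ^ 2) / 3 := by
  have ha : a ∉ ({b, c} : Finset ℝ) := by simp [hab, hac]
  simp only [SS, mu, sum_insert ha, sum_pair hbc, card_insert_of_notMem ha, card_pair hbc]
  push_cast
  ring

theorem stmt_0 (y₁ y₂ y₃ y₄ y₅ : ℝ)
    (h12 : y₁ < y₂) (h23 : y₂ < y₃) (h34 : y₃ < y₄) (h45 : y₄ < y₅) :
    SS {y₁, y₂} + SS {y₃, y₄, y₅} < SS {y₁, y₃} + SS {y₂, y₄, y₅} := by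
  rw [SS_pair h12.ne, SS_pair (h12.trans h23).ne, SS_triple h34.ne (h34.trans h45).ne h45.ne,
    SS_triple (h23.trans h34).ne (h23.trans (h34.trans h45)).ne h45.ne]
  have gain : 0 < (y₃ - y₂) * ((y₂ + y₃ - 2 * y₁) / 2 + 2 * (y₄ + y₅ - y₂ - y₃) / 3) := by
    apply mul_pos <;> linarith
  linarith
end

section
/- Let P₁ and P₂ be two disjoint finite sets of reals with means μ₁ < μ₂, and suppose there exist a ∈ P₁ and b ∈ P₂ with a > b. Then the partition obtained by swapping a and b, i.e., P₁' = (P₁ \ {a}) ∪ {b} and P₂' = (P₂ \ {b}) ∪ {a}, satisfies SS(P₁') + SS(P₂') ≤ SS(P₁) + SS(P₂), where SS(P) denotes the in-group sum of squared deviations from the group mean. -/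
open Finset

/-!
Replacing `a ∈ P` by `b` changes `SS P` by `-(a - b) (a + b - 2 μ(P)) - (a - b)² / |P|`.
Adding this for `P₁` (with `a ↦ b`) and `P₂` (with `b ↦ a`), the terms `a + b` cancel and the
total change is `-2 (a - b) (μ(P₂) - μ(P₁)) - (a - b)² (1/|P₁| + 1/|P₂|)`, which is `≤ 0`
as soon as `a > b` and `μ(P₁) < μ(P₂)`.
-/

theorem SS_eq_sum_sq_sub (P : Finset ℝ) (hP : P.Nonempty) :
    SS P = ∑ y ∈ P, y ^ 2 - (∑ y ∈ P, y) ^ 2 / #P := by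
  have hcard : (#P : ℝ) ≠ 0 := by exact_mod_cast hP.card_pos.ne'
  simp only [SS, mu, sub_sq, sum_add_distrib, sum_sub_distrib, ← sum_mul,
    sum_const, nsmul_eq_mul]
  rw [← mul_sum]
  field_simp
  ring

theorem sum_insert_erase_eq {α M : Type*} [DecidableEq α] [AddCommGroup M] (P : Finset α)
    (f : α → M) {a b : α} (ha : a ∈ P) (hb : b ∉ P.erase a) :
    ∑ y ∈ insert b (P.erase a), f y = ∑ y ∈ P, f y - f a + f b := by
  rw [sum_insert hb, sum_erase_eq_sub ha, add_comm]

theorem card_insert_erase_eq {α : Type*} [DecidableEq α] (P : Finset α) {a b : α} (ha : a ∈ P)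
    (hb : b ∉ P.erase a) :
    #(insert b (P.erase a)) = #P := by
  rw [card_insert_of_notMem hb, card_erase_add_one ha]

theorem SS_insert_erase (P : Finset ℝ) {a b : ℝ} (ha : a ∈ P) (hb : b ∉ P.erase a) :
    SS (insert b (P.erase a)) = SS P - (a - b) * (a + b - 2 * mu P) - (a - b) ^ 2 / #P := by
  have hcard : (#P : ℝ) ≠ 0 := by exact_mod_cast (card_pos.mpr ⟨a, ha⟩).ne'
  rw [SS_eq_sum_sq_sub _ (insert_nonempty _ _), SS_eq_sum_sq_sub _ ⟨a, ha⟩,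
    card_insert_erase_eq P ha hb, sum_insert_erase_eq P (· ^ 2) ha hb,
    sum_insert_erase_eq P (fun y => y) ha hb, mu]
  field_simp
  ring

theorem stmt_4_general (P₁ P₂ : Finset ℝ) (hdisj : Disjoint P₁ P₂)
    (hmu : mu P₁ < mu P₂)
    (a b : ℝ) (ha : a ∈ P₁) (hb : b ∈ P₂) (hab : b < a) :
    SS (insert b (P₁.erase a)) + SS (insert a (P₂.erase b)) ≤ SS P₁ + SS P₂ := by
  have hb₁ : b ∉ P₁.erase a := fun h => disjoint_left.mp hdisj (mem_of_mem_erase h) hb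
  have ha₂ : a ∉ P₂.erase b := fun h => disjoint_left.mp hdisj ha (mem_of_mem_erase h)
  rw [SS_insert_erase P₁ ha hb₁, SS_insert_erase P₂ hb ha₂]
  have hcross : 0 < (a - b) * (mu P₂ - mu P₁) := mul_pos (by linarith) (by linarith)
  have hsq₁ : 0 ≤ (a - b) ^ 2 / #P₁ := by positivity
  have hsq₂ : 0 ≤ (b - a) ^ 2 / #P₂ := by positivity
  linarith

theorem stmt_4 (P₁ P₂ : Finset ℝ) (hdisj : Disjoint P₁ P₂)
    (h₁ : 2 ≤ P₁.card) (h₂ : 2 ≤ P₂.card)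
    (hmu : mu P₁ < mu P₂)
    (a b : ℝ) (ha : a ∈ P₁) (hb : b ∈ P₂) (hab : b < a) :
    SS (insert b (P₁.erase a)) + SS (insert a (P₂.erase b)) ≤ SS P₁ + SS P₂ :=
  stmt_4_general P₁ P₂ hdisj hmu a b ha hb hab
end

section
/- Let f, g: X → ℝ be functions on a data set {x₁,...,x_N} with all values f(xⱼ) distinct, let σ_f and σ_g be permutations of {1,...,N} sorting f and g in decreasing order respectively, and define T(σ) = (2/(N(N−1))) Σ_{i<i'} (f(x_{σ(i)}) − f(x_{σ(i')})). Then T(σ_f) − T(σ_g) ≤ (4/√N) (Σ_{j=1}^{N} (f(xⱼ) − g(xⱼ))²)^{1/2}. -/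
open Finset

/-
Writing `w i = N - 1 - 2 i`, the pairwise sum in `T(σ)` equals `∑ i, w i * f (x (σ i))`, and
`|w i| ≤ N - 1`. Replacing `f` by `g` therefore moves each of `∑ w (f ∘ σ_f)` and `∑ w (f ∘ σ_g)` by
at most `(N - 1) ∑ |f - g|`, while by the rearrangement inequality `∑ w (g ∘ σ_f) ≤ ∑ w (g ∘ σ_g)`,
since `w` is decreasing and `σ_g` sorts `g` decreasingly. This gives
`T(σ_f) - T(σ_g) ≤ (4 / N) ∑ |f - g|`, and Cauchy–Schwarz finishes.
-/

/-- Normalized pairwise-difference ranking statistic of a permutation,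
measured with the scoring function `f`. -/
noncomputable def Tstat {X : Type*} {N : ℕ} (x : Fin N → X) (f : X → ℝ)
    (σ : Equiv.Perm (Fin N)) : ℝ :=
  (2 / (N * (N - 1) : ℝ)) *
    ∑ p ∈ univ.filter (fun p : Fin N × Fin N => p.1 < p.2),
      (f (x (σ p.1)) - f (x (σ p.2)))

noncomputable def rankWeight (N : ℕ) (i : Fin N) : ℝ := N - 1 - 2 * i

lemma rankWeight_antitone (N : ℕ) : Antitone (rankWeight N) := by
  intro i j hij
  have : (i : ℝ) ≤ j := by exact_mod_cast hij
  simp only [rankWeight]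
  linarith

lemma abs_rankWeight_le {N : ℕ} (i : Fin N) : |rankWeight N i| ≤ N - 1 := by
  have hi : (i : ℝ) + 1 ≤ N := by exact_mod_cast i.isLt
  have hi₀ : (0 : ℝ) ≤ i := Nat.cast_nonneg _
  rw [abs_le, rankWeight]
  constructor <;> linarith

lemma sum_lt_pairs_sub_eq_sum_rankWeight_mul {N : ℕ} (v : Fin N → ℝ) :
    ∑ p ∈ univ.filter (fun p : Fin N × Fin N => p.1 < p.2), (v p.1 - v p.2)
      = ∑ i, rankWeight N i * v i := by
  have hfirst : ∑ p ∈ univ.filter (fun p : Fin N × Fin N => p.1 < p.2), v p.1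
      = ∑ i, (#(Ioi i) : ℝ) * v i := by
    rw [sum_filter, Fintype.sum_prod_type]
    refine sum_congr rfl fun i _ => ?_
    rw [← sum_filter, filter_lt_eq_Ioi]
    simp
  have hsecond : ∑ p ∈ univ.filter (fun p : Fin N × Fin N => p.1 < p.2), v p.2
      = ∑ j, (#(Iio j) : ℝ) * v j := by
    rw [sum_filter, Fintype.sum_prod_type_right]
    refine sum_congr rfl fun j _ => ?_
    rw [← sum_filter, filter_gt_eq_Iio]
    simp
  rw [sum_sub_distrib, hfirst, hsecond, ← sum_sub_distrib]
  refine sum_congr rfl fun i _ => ?_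
  have hi := i.isLt
  rw [Fin.card_Ioi, Fin.card_Iio, Nat.cast_sub (by omega), Nat.cast_sub (by omega), rankWeight]
  push_cast
  ring

lemma Tstat_eq_sum_rankWeight_mul {X : Type*} {N : ℕ} (x : Fin N → X) (f : X → ℝ)
    (σ : Equiv.Perm (Fin N)) :
    Tstat x f σ = 2 / (N * (N - 1) : ℝ) * ∑ i, rankWeight N i * f (x (σ i)) := by
  rw [Tstat, sum_lt_pairs_sub_eq_sum_rankWeight_mul fun i => f (x (σ i))]

lemma sum_mul_comp_perm_sub_le {ι : Type*} [Fintype ι] {w : ι → ℝ} {B : ℝ}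
    (hw : ∀ i, |w i| ≤ B) (σ : Equiv.Perm ι) (u v : ι → ℝ) :
    ∑ i, w i * u (σ i) - ∑ i, w i * v (σ i) ≤ B * ∑ j, |u j - v j| := by
  rw [← Equiv.sum_comp σ fun j => |u j - v j|, ← sum_sub_distrib, mul_sum]
  refine sum_le_sum fun i _ => ?_
  calc w i * u (σ i) - w i * v (σ i) = w i * (u (σ i) - v (σ i)) := by ring
    _ ≤ |w i| * |u (σ i) - v (σ i)| := by rw [← abs_mul]; exact le_abs_self _
    _ ≤ B * |u (σ i) - v (σ i)| := by gcongr; exact hw i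

lemma sum_mul_comp_perm_sub_le_of_antitone {ι : Type*} [Fintype ι] [LinearOrder ι]
    {w : ι → ℝ} {B : ℝ} (hw : Antitone w) (hB : ∀ i, |w i| ≤ B) (F G : ι → ℝ)
    (σ τ : Equiv.Perm ι) (hτ : Antitone fun i => G (τ i)) :
    ∑ i, w i * F (σ i) - ∑ i, w i * F (τ i) ≤ 2 * B * ∑ j, |F j - G j| := by
  have hσ := sum_mul_comp_perm_sub_le hB σ F G
  have hτ' := sum_mul_comp_perm_sub_le hB τ G F
  have hrearr : ∑ i, w i * G (σ i) ≤ ∑ i, w i * G (τ i) := by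
    simpa using (hw.monovary hτ).sum_mul_comp_perm_le_sum_mul (σ := τ⁻¹ * σ)
  simp only [abs_sub_comm (G _)] at hτ'
  linarith

lemma two_div_mul_mul_sub_one_le (N : ℕ) :
    2 / (N * (N - 1) : ℝ) * (2 * (N - 1)) ≤ 4 / N := by
  by_cases h : (N : ℝ) - 1 = 0
  · rw [h, mul_zero, mul_zero, mul_zero]
    positivity
  · refine le_of_eq ?_
    calc 2 / (N * (N - 1) : ℝ) * (2 * (N - 1)) = 4 * (N - 1) / (N * (N - 1)) := by ring
      _ = 4 / N := mul_div_mul_right _ _ h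

lemma Tstat_sub_Tstat_le {X : Type*} {N : ℕ} (x : Fin N → X) (f g : X → ℝ)
    (σ τ : Equiv.Perm (Fin N)) (hτ : Antitone fun i => g (x (τ i))) :
    Tstat x f σ - Tstat x f τ ≤ 4 / N * ∑ j, |f (x j) - g (x j)| := by
  have hNN : 0 ≤ (N * (N - 1) : ℝ) := by
    rcases N with _ | n
    · simp
    · push_cast
      nlinarith
  have hsum := sum_mul_comp_perm_sub_le_of_antitone (rankWeight_antitone N) abs_rankWeight_le
    (fun j => f (x j)) (fun j => g (x j)) σ τ hτ
  calc Tstat x f σ - Tstat x f τ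
      = 2 / (N * (N - 1) : ℝ) *
          (∑ i, rankWeight N i * f (x (σ i)) - ∑ i, rankWeight N i * f (x (τ i))) := by
        rw [Tstat_eq_sum_rankWeight_mul, Tstat_eq_sum_rankWeight_mul, ← mul_sub]
    _ ≤ 2 / (N * (N - 1) : ℝ) * (2 * (N - 1) * ∑ j, |f (x j) - g (x j)|) :=
        mul_le_mul_of_nonneg_left hsum (div_nonneg zero_le_two hNN)
    _ = 2 / (N * (N - 1) : ℝ) * (2 * (N - 1)) * ∑ j, |f (x j) - g (x j)| := by ring
    _ ≤ 4 / N * ∑ j, |f (x j) - g (x j)| :=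
        mul_le_mul_of_nonneg_right (two_div_mul_mul_sub_one_le N)
          (sum_nonneg fun j _ => abs_nonneg _)

lemma sum_abs_le_sqrt_card_mul_sqrt_sum_sq {ι : Type*} [Fintype ι] (a : ι → ℝ) :
    ∑ j, |a j| ≤ √(Fintype.card ι) * √(∑ j, a j ^ 2) := by
  rw [← Real.sqrt_mul (Nat.cast_nonneg _)]
  refine (le_abs_self _).trans (Real.abs_le_sqrt ?_)
  simpa using sq_sum_le_card_mul_sum_sq (s := univ) (f := fun j => |a j|)

theorem stmt_18_general {X : Type*} (N : ℕ) (x : Fin N → X) (f g : X → ℝ)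
    (σf σg : Equiv.Perm (Fin N))
    (hσg : ∀ i j : Fin N, i ≤ j → g (x (σg j)) ≤ g (x (σg i))) :
    Tstat x f σf - Tstat x f σg
      ≤ (4 / Real.sqrt N) * Real.sqrt (∑ j, (f (x j) - g (x j)) ^ 2) := by
  have hcs := sum_abs_le_sqrt_card_mul_sqrt_sum_sq fun j => f (x j) - g (x j)
  rw [Fintype.card_fin] at hcs
  calc Tstat x f σf - Tstat x f σg ≤ 4 / N * ∑ j, |f (x j) - g (x j)| :=
        Tstat_sub_Tstat_le x f g σf σg hσg
    _ ≤ 4 / N * (√N * √(∑ j, (f (x j) - g (x j)) ^ 2)) := by gcongr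
    _ = 4 / √N * √(∑ j, (f (x j) - g (x j)) ^ 2) := by
        rw [← mul_assoc, div_mul_eq_mul_div, mul_div_assoc, Real.sqrt_div_self', mul_one_div]

theorem stmt_18 {X : Type*} (N : ℕ) (hN : 0 < N) (x : Fin N → X) (f g : X → ℝ)
    (hf : Function.Injective fun j : Fin N => f (x j))
    (σf σg : Equiv.Perm (Fin N))
    (hσf : ∀ i j : Fin N, i ≤ j → f (x (σf j)) ≤ f (x (σf i)))
    (hσg : ∀ i j : Fin N, i ≤ j → g (x (σg j)) ≤ g (x (σg i))) :
    Tstat x f σf - Tstat x f σg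
      ≤ (4 / Real.sqrt N) * Real.sqrt (∑ j, (f (x j) - g (x j)) ^ 2) :=
  stmt_18_general N x f g σf σg hσg
end
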